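/- arXiv:math/0607752 — 5 statements merged into one kernel-verified Lean document; each statement's English description precedes it below -/
import Mathlib

section
/- Let A₁, A₂, B₁, B₂ be points of ℤ², and for points P,Q let P(P→Q) denote the number of lattice paths (right/down steps) from P to Q. Assume that every lattice path from A₁ to B₂ shares at least one point with every lattice path from A₂ to B₁. Then the number of pairs (π₁, π₂) where π₁ is a path from A₁ to B₁, π₂ is a path from A₂ to B₂, and π₁ and π₂ have no common point, equals P(A₁→B₁)·P(A₂→B₂) − P(A₁→B₂)·P(A₂→B₁). -/
/-!
Exchanging the tails of two meeting paths after the first point of the first path lying on the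
second gives a meeting pair of paths with the end points exchanged. Lattice paths never revisit a
point, so the new pair has the same first common point and the exchange is an involution. Hence
the meeting pairs `(A₁ → B₁, A₂ → B₂)` are as many as the meeting pairs `(A₁ → B₂, A₂ → B₁)`,
which by hypothesis are all pairs `(A₁ → B₂, A₂ → B₁)`.
-/

/-- One point of ℤ² is obtained from another by a right step (+1,0)
or a down step (0,−1). -/
def LatticeStep (p q : ℤ × ℤ) : Prop :=
  q = (p.1 + 1, p.2) ∨ q = (p.1, p.2 - 1)

/-- `l` is a lattice path from `A` to `B`: a nonempty finite sequence of points
of ℤ² starting at `A`, ending at `B`, each point obtained from the previous one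
by a right step or a down step. -/
def IsLatticePath (A B : ℤ × ℤ) (l : List (ℤ × ℤ)) : Prop :=
  l ≠ [] ∧ l.head? = some A ∧ l.getLast? = some B ∧ l.Chain' LatticeStep

/-- The number of lattice paths from `A` to `B`. -/
noncomputable def pathCount (A B : ℤ × ℤ) : ℕ :=
  Set.ncard {l : List (ℤ × ℤ) | IsLatticePath A B l}

theorem List.IsChain.splice {α : Type*} {R : α → α → Prop} {a b c d : List α} {p : α}
    (h₁ : IsChain R (a ++ p :: b)) (h₂ : IsChain R (c ++ p :: d)) : IsChain R (a ++ p :: d) := by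
  rw [List.isChain_append] at h₁ h₂ ⊢
  exact ⟨h₁.1, h₂.2.1, by simpa using h₁.2.2⟩

section TailSwap

variable {α : Type*} [DecidableEq α]

/-- Cut both lists at the first entry `p` of the first list that occurs in the second, and
exchange the parts from `p` on. -/
def tailSwap (P : List α × List α) : List α × List α :=
  match P.1.find? (fun x => decide (x ∈ P.2)) with
  | none => P
  | some p => (P.1.takeWhile (· != p) ++ P.2.dropWhile (· != p),
      P.2.takeWhile (· != p) ++ P.1.dropWhile (· != p))

theorem List.takeWhile_ne_append_cons {c d : List α} {p : α} (hc : p ∉ c) :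
    (c ++ p :: d).takeWhile (· != p) = c := by
  rw [List.takeWhile_append_of_pos fun x hx => by simpa using ne_of_mem_of_not_mem hx hc]
  simp

theorem List.dropWhile_ne_append_cons {c d : List α} {p : α} (hc : p ∉ c) :
    (c ++ p :: d).dropWhile (· != p) = p :: d := by
  rw [List.dropWhile_append_of_pos fun x hx => by simpa using ne_of_mem_of_not_mem hx hc]
  simp

theorem tailSwap_eq {a b c d : List α} {p : α} (ha : ∀ x ∈ a, x ∉ c ++ p :: d) (hc : p ∉ c) :
    tailSwap (a ++ p :: b, c ++ p :: d) = (a ++ p :: d, c ++ p :: b) := by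
  have hfind : (a ++ p :: b).find? (fun x => decide (x ∈ c ++ p :: d)) = some p :=
    List.find?_eq_some_iff_append.2 ⟨by simp, a, b, rfl, by simpa using ha⟩
  have hpa : p ∉ a := fun hp => ha p hp (by simp)
  simp only [tailSwap, hfind, List.takeWhile_ne_append_cons hpa, List.takeWhile_ne_append_cons hc,
    List.dropWhile_ne_append_cons hpa, List.dropWhile_ne_append_cons hc]

theorem exists_eq_append_cons_of_exists_mem_mem {l₁ l₂ : List α} (h : ∃ p, p ∈ l₁ ∧ p ∈ l₂) :
    ∃ a b c d p, l₁ = a ++ p :: b ∧ l₂ = c ++ p :: d ∧ (∀ x ∈ a, x ∉ l₂) ∧ p ∉ c := by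
  obtain ⟨p, hp⟩ := Option.isSome_iff_exists.1
    (List.find?_isSome.2 (by simpa using h) : (l₁.find? fun x => decide (x ∈ l₂)).isSome)
  obtain ⟨hp₂, a, b, rfl, ha⟩ := List.find?_eq_some_iff_append.1 hp
  obtain ⟨c, d, rfl, hc⟩ := List.eq_append_cons_of_mem (of_decide_eq_true hp₂)
  exact ⟨a, b, c, d, p, rfl, rfl, by simpa using ha, hc⟩

theorem tailSwap_tailSwap {l₁ l₂ : List α} (hl₁ : l₁.Nodup) (h : ∃ p, p ∈ l₁ ∧ p ∈ l₂) :
    tailSwap (tailSwap (l₁, l₂)) = (l₁, l₂) := by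
  obtain ⟨a, b, c, d, p, rfl, rfl, ha, hc⟩ := exists_eq_append_cons_of_exists_mem_mem h
  have ha' : ∀ x ∈ a, x ∉ c ++ p :: b := by
    intro x hx hxcb
    rcases List.mem_append.1 hxcb with hxc | hxb
    · exact ha x hx (List.mem_append_left _ hxc)
    · exact List.disjoint_of_nodup_append hl₁ hx hxb
  rw [tailSwap_eq ha hc, tailSwap_eq ha' hc]

theorem exists_mem_mem_tailSwap {l₁ l₂ : List α} (h : ∃ p, p ∈ l₁ ∧ p ∈ l₂) :
    ∃ p, p ∈ (tailSwap (l₁, l₂)).1 ∧ p ∈ (tailSwap (l₁, l₂)).2 := by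
  obtain ⟨a, b, c, d, p, rfl, rfl, ha, hc⟩ := exists_eq_append_cons_of_exists_mem_mem h
  exact ⟨p, by simp [tailSwap_eq ha hc]⟩

end TailSwap

theorem Set.Finite.setOf_nodup_subset {α : Type*} {s : Set α} (hs : s.Finite) :
    {l : List α | l.Nodup ∧ ∀ x ∈ l, x ∈ s}.Finite := by
  have := hs.to_subtype
  have := Fintype.ofFinite s
  refine ((List.finite_length_le s (Fintype.card s)).image (List.map Subtype.val)).subset ?_
  rintro l ⟨hnodup, hmem⟩
  lift l to List s using hmem
  exact ⟨l, (hnodup.of_map _).length_le_card, rfl⟩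

/-- Turns right and down steps into steps that increase in the product order of `ℤ × ℤ`. -/
def negSnd (p : ℤ × ℤ) : ℤ × ℤ := (p.1, -p.2)

theorem negSnd_injective : Function.Injective negSnd := fun p q h => by
  simp only [negSnd, Prod.mk.injEq, neg_inj] at h
  exact Prod.ext h.1 h.2

theorem LatticeStep.negSnd_lt {p q : ℤ × ℤ} (h : LatticeStep p q) : negSnd p < negSnd q := by
  rcases h with rfl | rfl <;> simp [negSnd, Prod.lt_iff]

namespace IsLatticePath

variable {A B C D : ℤ × ℤ} {l : List (ℤ × ℤ)}

theorem pairwise_negSnd_lt (h : IsLatticePath A B l) : l.Pairwise (negSnd · < negSnd ·) :=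
  List.isChain_iff_pairwise.1 (h.2.2.2.imp fun _ _ => LatticeStep.negSnd_lt)

theorem nodup (h : IsLatticePath A B l) : l.Nodup :=
  h.pairwise_negSnd_lt.imp fun hlt => ne_of_apply_ne negSnd hlt.ne

theorem negSnd_mem_Icc (h : IsLatticePath A B l) {x : ℤ × ℤ} (hx : x ∈ l) :
    negSnd x ∈ Set.Icc (negSnd A) (negSnd B) := by
  have hpw := h.pairwise_negSnd_lt
  obtain ⟨-, hA, hB, -⟩ := h
  constructor
  · obtain ⟨t, rfl⟩ := List.head?_eq_some_iff.1 hA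
    rcases List.mem_cons.1 hx with rfl | hx
    · exact le_rfl
    · exact (List.rel_of_pairwise_cons hpw hx).le
  · obtain ⟨s, rfl⟩ := List.getLast?_eq_some_iff.1 hB
    rcases List.mem_append.1 hx with hx | hx
    · exact (List.pairwise_append.1 hpw).2.2 _ hx _ (List.mem_singleton_self B) |>.le
    · rw [List.mem_singleton.1 hx]

theorem splice {a b c d : List (ℤ × ℤ)} {p : ℤ × ℤ} (h₁ : IsLatticePath A B (a ++ p :: b))
    (h₂ : IsLatticePath C D (c ++ p :: d)) : IsLatticePath A D (a ++ p :: d) := by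
  obtain ⟨-, hA, -, hc₁⟩ := h₁
  obtain ⟨-, -, hD, hc₂⟩ := h₂
  refine ⟨by simp, by cases a <;> simpa using hA, by simpa using hD, hc₁.splice hc₂⟩

end IsLatticePath

theorem setOf_isLatticePath_finite (A B : ℤ × ℤ) : {l | IsLatticePath A B l}.Finite :=
  ((Set.finite_Icc (negSnd A) (negSnd B)).preimage negSnd_injective.injOn).setOf_nodup_subset
    |>.subset fun _ h => ⟨h.nodup, fun _ hx => h.negSnd_mem_Icc hx⟩

theorem isLatticePath_tailSwap {A B C D : ℤ × ℤ} {l₁ l₂ : List (ℤ × ℤ)}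
    (h₁ : IsLatticePath A B l₁) (h₂ : IsLatticePath C D l₂) (h : ∃ p, p ∈ l₁ ∧ p ∈ l₂) :
    IsLatticePath A D (tailSwap (l₁, l₂)).1 ∧ IsLatticePath C B (tailSwap (l₁, l₂)).2 := by
  obtain ⟨a, b, c, d, p, rfl, rfl, ha, hc⟩ := exists_eq_append_cons_of_exists_mem_mem h
  rw [tailSwap_eq ha hc]
  exact ⟨h₁.splice h₂, h₂.splice h₁⟩

def meetingPairs (A B C D : ℤ × ℤ) : Set (List (ℤ × ℤ) × List (ℤ × ℤ)) :=
  {P | IsLatticePath A B P.1 ∧ IsLatticePath C D P.2 ∧ ∃ p, p ∈ P.1 ∧ p ∈ P.2}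

theorem mapsTo_tailSwap_meetingPairs (A B C D : ℤ × ℤ) :
    Set.MapsTo tailSwap (meetingPairs A B C D) (meetingPairs A D C B) :=
  fun _ ⟨h₁, h₂, h⟩ => ⟨(isLatticePath_tailSwap h₁ h₂ h).1, (isLatticePath_tailSwap h₁ h₂ h).2,
    exists_mem_mem_tailSwap h⟩

theorem bijOn_tailSwap_meetingPairs (A B C D : ℤ × ℤ) :
    Set.BijOn tailSwap (meetingPairs A B C D) (meetingPairs A D C B) :=
  have hinv {A B C D : ℤ × ℤ} : Set.LeftInvOn tailSwap tailSwap (meetingPairs A B C D) :=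
    fun _ ⟨h₁, _, h⟩ => tailSwap_tailSwap h₁.nodup h
  Set.InvOn.bijOn ⟨hinv, hinv⟩ (mapsTo_tailSwap_meetingPairs A B C D)
    (mapsTo_tailSwap_meetingPairs A D C B)

theorem ncard_add_ncard_meetingPairs (A B C D : ℤ × ℤ) :
    {P : List (ℤ × ℤ) × List (ℤ × ℤ) |
      IsLatticePath A B P.1 ∧ IsLatticePath C D P.2 ∧ ¬∃ p, p ∈ P.1 ∧ p ∈ P.2}.ncard +
      (meetingPairs A B C D).ncard = pathCount A B * pathCount C D := by
  have hfin := (setOf_isLatticePath_finite A B).prod (setOf_isLatticePath_finite C D)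
  rw [pathCount, pathCount, ← Set.ncard_prod,
    ← Set.ncard_union_eq _ (hfin.subset _) (hfin.subset _)]
  · congr 1
    ext P
    simp only [meetingPairs, Set.mem_union, Set.mem_ofPred_eq, Set.mem_prod]
    tauto
  · exact Set.disjoint_left.2 fun _ h h' => h.2.2 h'.2.2
  · exact fun _ h => ⟨h.1, h.2.1⟩
  · exact fun _ h => ⟨h.1, h.2.1⟩

/-- The 2-path case of the Lindström–Gessel–Viennot lemma: if every lattice path
from A₁ to B₂ meets every lattice path from A₂ to B₁, then the number of pairs of
nonintersecting lattice paths (A₁ → B₁, A₂ → B₂) equals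
P(A₁→B₁)·P(A₂→B₂) − P(A₁→B₂)·P(A₂→B₁). -/
theorem lgv_two_paths (A₁ A₂ B₁ B₂ : ℤ × ℤ)
    (hcross : ∀ π₁ π₂ : List (ℤ × ℤ), IsLatticePath A₁ B₂ π₁ → IsLatticePath A₂ B₁ π₂ →
      ∃ p : ℤ × ℤ, p ∈ π₁ ∧ p ∈ π₂) :
    (Set.ncard {P : List (ℤ × ℤ) × List (ℤ × ℤ) |
        IsLatticePath A₁ B₁ P.1 ∧ IsLatticePath A₂ B₂ P.2 ∧
          ¬∃ p : ℤ × ℤ, p ∈ P.1 ∧ p ∈ P.2} : ℤ) =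
      (pathCount A₁ B₁ : ℤ) * pathCount A₂ B₂ -
        (pathCount A₁ B₂ : ℤ) * pathCount A₂ B₁ := by
  have hall : meetingPairs A₁ B₂ A₂ B₁ =
      {l | IsLatticePath A₁ B₂ l} ×ˢ {l | IsLatticePath A₂ B₁ l} :=
    Set.ext fun P => ⟨fun h => ⟨h.1, h.2.1⟩, fun h => ⟨h.1, h.2, hcross P.1 P.2 h.1 h.2⟩⟩
  have hcount := ncard_add_ncard_meetingPairs A₁ B₁ A₂ B₂
  rw [(bijOn_tailSwap_meetingPairs A₁ B₁ A₂ B₂).ncard_eq, hall, Set.ncard_prod] at hcount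
  rw [eq_sub_iff_add_eq]
  exact_mod_cast hcount
end

section
/- For all integers d ≥ 1 and N ≥ 0, the polynomial Σ_{i=0}^{d} (−1)^{d−i} C(d,i) (1 + i·u)^N in ℤ[u] is divisible by d! · u^d in ℤ[u]. -/
open Polynomial

/-- The `d`-th finite difference of `i ↦ i^k` at 0. -/
def diffA (k d : ℕ) : ℤ :=
  ∑ i ∈ Finset.range (d + 1), (-1 : ℤ) ^ (d - i) * (d.choose i : ℤ) * (i : ℤ) ^ k

lemma diffA_zero_left (d : ℕ) (hd : 1 ≤ d) : diffA 0 d = 0 := by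
  have key : ∑ i ∈ Finset.range (d + 1), (-1 : ℤ) ^ i * (d.choose i : ℤ) = 0 := by
    rw [Int.alternating_sum_range_choose, if_neg (by omega : d ≠ 0)]
  have : diffA 0 d = (-1 : ℤ) ^ d * ∑ i ∈ Finset.range (d + 1),
      (-1 : ℤ) ^ i * (d.choose i : ℤ) := by
    unfold diffA
    rw [Finset.mul_sum]
    apply Finset.sum_congr rfl
    intro i hi
    have hid : i ≤ d := by
      have := Finset.mem_range.mp hi; omega
    have h1 : (-1 : ℤ) ^ (d - i) * (-1 : ℤ) ^ i = (-1 : ℤ) ^ d := by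
      rw [← pow_add]; congr 1; omega
    have h2 : (-1 : ℤ) ^ i * (-1 : ℤ) ^ i = 1 := by
      rw [← pow_add, ← two_mul, pow_mul]; norm_num
    rw [pow_zero, mul_one, ← h1]
    calc (-1 : ℤ) ^ (d - i) * (d.choose i : ℤ)
        = ((-1 : ℤ) ^ i * (-1 : ℤ) ^ i) * ((-1 : ℤ) ^ (d - i) * (d.choose i : ℤ)) := by
          rw [h2, one_mul]
      _ = ((-1 : ℤ) ^ (d - i) * (-1 : ℤ) ^ i) * ((-1 : ℤ) ^ i * (d.choose i : ℤ)) := by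
          ring
  rw [this, key, mul_zero]

lemma diffA_succ (k e : ℕ) :
    diffA (k + 1) (e + 1) =
      (e + 1 : ℤ) * ∑ m ∈ Finset.range (k + 1), (k.choose m : ℤ) * diffA m e := by
  unfold diffA
  rw [Finset.sum_range_succ' (fun i => (-1 : ℤ) ^ (e + 1 - i) * ((e+1).choose i : ℤ) * (i : ℤ) ^ (k+1)) (e+1)]
  simp only [Nat.cast_zero, ne_eq, Nat.succ_ne_zero, not_false_eq_true, zero_pow, mul_zero, add_zero]
  have step1 : ∀ j ∈ Finset.range (e + 1),
      (-1 : ℤ) ^ (e + 1 - (j + 1)) * (((e+1).choose (j+1) : ℕ) : ℤ) * ((j : ℤ) + 1) ^ (k+1)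
        = (e + 1 : ℤ) * ((-1 : ℤ) ^ (e - j) * (e.choose j : ℤ) * ((j : ℤ) + 1) ^ k) := by
    intro j hj
    have hje : j ≤ e := by have := Finset.mem_range.mp hj; omega
    have hch : ((e+1).choose (j+1) : ℤ) * ((j : ℤ) + 1) = (e + 1 : ℤ) * (e.choose j : ℤ) := by
      have := Nat.add_one_mul_choose_eq e j
      have : (e + 1) * e.choose j = (e+1).choose (j+1) * (j+1) := this
      exact_mod_cast (congrArg (fun n : ℕ => (n : ℤ)) this.symm)
    have hsub : e + 1 - (j + 1) = e - j := by omega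
    rw [hsub, pow_succ]
    calc (-1 : ℤ) ^ (e - j) * ((e+1).choose (j+1) : ℤ) * (((j : ℤ) + 1) ^ k * ((j : ℤ) + 1))
        = (-1 : ℤ) ^ (e - j) * (((e+1).choose (j+1) : ℤ) * ((j : ℤ) + 1)) * ((j : ℤ) + 1) ^ k := by ring
      _ = (-1 : ℤ) ^ (e - j) * ((e + 1 : ℤ) * (e.choose j : ℤ)) * ((j : ℤ) + 1) ^ k := by rw [hch]
      _ = (e + 1 : ℤ) * ((-1 : ℤ) ^ (e - j) * (e.choose j : ℤ) * ((j : ℤ) + 1) ^ k) := by ring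
  calc ∑ j ∈ Finset.range (e + 1),
        (-1 : ℤ) ^ (e + 1 - (j + 1)) * (((e+1).choose (j+1) : ℕ) : ℤ) * (((j : ℕ) + 1 : ℕ) : ℤ) ^ (k+1)
      = ∑ j ∈ Finset.range (e + 1),
        (e + 1 : ℤ) * ((-1 : ℤ) ^ (e - j) * (e.choose j : ℤ) * ((j : ℤ) + 1) ^ k) := by
        apply Finset.sum_congr rfl
        intro j hj
        rw [← step1 j hj]
        push_cast
        ring
    _ = (e + 1 : ℤ) * ∑ j ∈ Finset.range (e + 1),
        (-1 : ℤ) ^ (e - j) * (e.choose j : ℤ) * ((j : ℤ) + 1) ^ k := by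
        rw [Finset.mul_sum]
    _ = (e + 1 : ℤ) * ∑ m ∈ Finset.range (k + 1), (k.choose m : ℤ) *
        ∑ i ∈ Finset.range (e + 1), (-1 : ℤ) ^ (e - i) * (e.choose i : ℤ) * (i : ℤ) ^ m := by
        congr 1
        have expand : ∀ j : ℕ, ((j : ℤ) + 1) ^ k
            = ∑ m ∈ Finset.range (k + 1), (j : ℤ) ^ m * (k.choose m : ℤ) := by
          intro j
          rw [add_pow]
          simp
        calc ∑ j ∈ Finset.range (e + 1), (-1 : ℤ) ^ (e - j) * (e.choose j : ℤ) * ((j : ℤ) + 1) ^ k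
            = ∑ j ∈ Finset.range (e + 1), ∑ m ∈ Finset.range (k + 1),
              (k.choose m : ℤ) * ((-1 : ℤ) ^ (e - j) * (e.choose j : ℤ) * (j : ℤ) ^ m) := by
              apply Finset.sum_congr rfl
              intro j _
              rw [expand j, Finset.mul_sum]
              apply Finset.sum_congr rfl
              intro m _
              ring
          _ = ∑ m ∈ Finset.range (k + 1), (k.choose m : ℤ) *
              ∑ i ∈ Finset.range (e + 1), (-1 : ℤ) ^ (e - i) * (e.choose i : ℤ) * (i : ℤ) ^ m := by
              rw [Finset.sum_comm]
              apply Finset.sum_congr rfl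
              intro m _
              rw [Finset.mul_sum]

/-- The `d`-th finite difference of `i^k` is divisible by `d!`, and vanishes for `k < d`. -/
lemma diffA_key (k : ℕ) : ∀ d : ℕ,
    ∃ m : ℤ, diffA k d = (d.factorial : ℤ) * m ∧ (k < d → diffA k d = 0) := by
  induction k using Nat.strong_induction_on with
  | _ k ih =>
    intro d
    match d with
    | 0 =>
      refine ⟨diffA k 0, ?_, ?_⟩
      · simp [Nat.factorial]
      · omega
    | e + 1 =>
      match k with
      | 0 =>
        have h0 : diffA 0 (e+1) = 0 := diffA_zero_left (e+1) (by omega)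
        exact ⟨0, by rw [h0, mul_zero], fun _ => h0⟩
      | k' + 1 =>
        have hrec := diffA_succ k' e
        have hdvd : (e.factorial : ℤ) ∣
            ∑ m ∈ Finset.range (k' + 1), (k'.choose m : ℤ) * diffA m e := by
          apply Finset.dvd_sum
          intro m hm
          obtain ⟨s, hs, -⟩ := ih m (by have := Finset.mem_range.mp hm; omega) e
          rw [hs]
          exact (dvd_mul_right (e.factorial : ℤ) s).mul_left _
        obtain ⟨t, ht⟩ := hdvd
        refine ⟨t, ?_, ?_⟩
        · rw [hrec, ht, Nat.factorial_succ]
          push_cast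
          ring
        · intro hk
          have hz : ∑ m ∈ Finset.range (k' + 1), (k'.choose m : ℤ) * diffA m e = 0 := by
            apply Finset.sum_eq_zero
            intro m hm
            obtain ⟨-, -, h0⟩ := ih m (by have := Finset.mem_range.mp hm; omega) e
            rw [h0 (by have := Finset.mem_range.mp hm; omega), mul_zero]
          rw [hrec, hz, mul_zero]

/-- For d ≥ 1 and N ≥ 0, the polynomial Σ_{i=0}^{d} (−1)^{d−i} C(d,i) (1+iu)^N
in ℤ[u] is divisible by d!·u^d. -/
theorem dfact_ud_dvd (d N : ℕ) (hd : 1 ≤ d) :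
    (C (d.factorial : ℤ) * X ^ d) ∣
      ∑ i ∈ Finset.range (d + 1),
        C ((-1 : ℤ) ^ (d - i) * (d.choose i : ℤ)) * (1 + C (i : ℤ) * X) ^ N := by
  have hexp : ∀ i : ℕ, (1 + C (i : ℤ) * X) ^ N
      = ∑ k ∈ Finset.range (N + 1), C ((i : ℤ) ^ k * (N.choose k : ℤ)) * X ^ k := by
    intro i
    rw [add_comm, add_pow]
    apply Finset.sum_congr rfl
    intro k _
    rw [one_pow, mul_one, mul_pow, map_mul, ← C_pow, map_natCast]
    ring
  have hswap : ∑ i ∈ Finset.range (d + 1),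
        C ((-1 : ℤ) ^ (d - i) * (d.choose i : ℤ)) * (1 + C (i : ℤ) * X) ^ N
      = ∑ k ∈ Finset.range (N + 1), C ((N.choose k : ℤ) * diffA k d) * X ^ k := by
    calc ∑ i ∈ Finset.range (d + 1),
          C ((-1 : ℤ) ^ (d - i) * (d.choose i : ℤ)) * (1 + C (i : ℤ) * X) ^ N
        = ∑ i ∈ Finset.range (d + 1), ∑ k ∈ Finset.range (N + 1),
          C ((N.choose k : ℤ) * ((-1 : ℤ) ^ (d - i) * (d.choose i : ℤ) * (i : ℤ) ^ k)) * X ^ k := by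
          apply Finset.sum_congr rfl
          intro i _
          rw [hexp i, Finset.mul_sum]
          apply Finset.sum_congr rfl
          intro k _
          rw [← mul_assoc, ← map_mul]
          congr 2
          ring
      _ = ∑ k ∈ Finset.range (N + 1), C ((N.choose k : ℤ) * diffA k d) * X ^ k := by
          rw [Finset.sum_comm]
          apply Finset.sum_congr rfl
          intro k _
          unfold diffA
          rw [Finset.mul_sum, map_sum, ← Finset.sum_mul]
  rw [hswap]
  apply Finset.dvd_sum
  intro k hk
  obtain ⟨m, hm, h0⟩ := diffA_key k d
  by_cases hkd : k < d
  · rw [h0 hkd, mul_zero, map_zero, zero_mul]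
    exact dvd_zero _
  · push_neg at hkd
    rw [hm]
    have hx : (X : ℤ[X]) ^ d ∣ X ^ k := pow_dvd_pow X hkd
    have hc : C (d.factorial : ℤ) ∣ C ((N.choose k : ℤ) * ((d.factorial : ℤ) * m)) := by
      exact _root_.map_dvd C ((dvd_mul_right (d.factorial : ℤ) m).mul_left _)
    exact mul_dvd_mul hc hx
end

section
/- Let α₁ ≥ α₂ ≥ 0 and β₁ ≥ β₂ ≥ 0 be integers with β₁ ≤ α₁ and β₂ ≤ α₂. Then Σ_{ℓ=0}^{α₂} det [ [ C(α₁−ℓ, β₁−ℓ), C(α₁−ℓ, β₂−1−ℓ) ], [ C(α₂, β₁+1+ℓ), C(α₂, β₂+ℓ) ] ] ≥ 0. -/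
open Nat

private lemma fs2 (k : ℕ) : (k+2)! = (k+2)*((k+1)*k !) := rfl

/-- Core factorial inequality, subtraction-free form. -/
private lemma factIneq : ∀ d a' b p q : ℕ, a' ≤ b → q ≤ p →
    (a'+d)! * p ! * b ! * (d+q)! ≤ a' ! * (d+p)! * (b+d)! * q !
  | 0, a', b, p, q, _, _ => by simp [Nat.add_zero]
  | 1, a', b, p, q, h1, h2 => by
      have e1 : (a'+1)! * p ! * b ! * (1+q)! = ((a'+1)*(q+1)) * (a' ! * p ! * b ! * q !) := by
        rw [show 1+q = q+1 by omega, Nat.factorial_succ, Nat.factorial_succ]; ring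
      have e2 : a' ! * (1+p)! * (b+1)! * q ! = ((b+1)*(p+1)) * (a' ! * p ! * b ! * q !) := by
        rw [show 1+p = p+1 by omega, Nat.factorial_succ, Nat.factorial_succ]; ring
      rw [e1, e2]
      exact Nat.mul_le_mul_right _ (Nat.mul_le_mul (by omega) (by omega))
  | (d+2), a', b, p, q, h1, h2 => by
      have IH := factIneq d (a'+1) (b+1) p q (by omega) h2
      -- Goal: (a'+d+2)! * p! * b! * (d+2+q)! ≤ a' ! * (d+2+p)! * (b+d+2)! * q!
      have key : ((a'+(d+2))! * p ! * b ! * ((d+2)+q)!) * ((b+1)*(a'+1)) ≤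
          (a' ! * ((d+2)+p)! * (b+(d+2))! * q !) * ((b+1)*(a'+1)) := by
        have eL : ((a'+(d+2))! * p ! * b ! * ((d+2)+q)!) * ((b+1)*(a'+1)) =
            (((a'+1)+d)! * p ! * (b+1)! * (d+q)!) *
              ((a'+1) * ((a'+d+2) * ((d+q+1)*(d+q+2)))) := by
          rw [show a'+(d+2) = (a'+d)+2 by omega, fs2, show (d+2)+q = (d+q)+2 by omega, fs2,
            show (a'+1)+d = (a'+d)+1 by omega, Nat.factorial_succ, Nat.factorial_succ]
          ring
        have eR : (a' ! * ((d+2)+p)! * (b+(d+2))! * q !) * ((b+1)*(a'+1)) =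
            ((a'+1)! * (d+p)! * ((b+1)+d)! * q !) *
              ((b+1) * ((b+d+2) * ((d+p+1)*(d+p+2)))) := by
          rw [show (d+2)+p = (d+p)+2 by omega, fs2, show b+(d+2) = (b+d)+2 by omega, fs2,
            show (b+1)+d = (b+d)+1 by omega, Nat.factorial_succ, Nat.factorial_succ]
          ring
        rw [eL, eR]
        exact Nat.mul_le_mul IH (Nat.mul_le_mul (by omega)
          (Nat.mul_le_mul (by omega) (Nat.mul_le_mul (by omega) (by omega))))
      have hpos : 0 < (b+1)*(a'+1) := by positivity
      exact Nat.le_of_mul_le_mul_right key hpos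

/-- The binomial product inequality over ℕ. -/
private lemma chooseIneq (n m a a' b b' : ℕ) (h1 : a' ≤ a) (h2 : a ≤ n) (h3 : b ≤ b')
    (h4 : b' ≤ m) (h5 : a + b = a' + b') (h6 : a + m ≤ n + b') (h7 : a' ≤ b) :
    n.choose a' * m.choose b' ≤ n.choose a * m.choose b := by
  obtain ⟨d, hd⟩ : ∃ d, a = a' + d := ⟨a - a', by omega⟩
  obtain ⟨p, hp⟩ : ∃ p, n = a + p := ⟨n - a, by omega⟩
  obtain ⟨q, hq⟩ : ∃ q, m = b' + q := ⟨m - b', by omega⟩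
  have hb' : b' = b + d := by omega
  have F := factIneq d a' b p q h7 (by omega)
  -- translate to: a!(n-a)! b!(m-b)! ≤ a' !(n-a')! b' !(m-b')!
  have key : a ! * (n-a)! * (b ! * (m-b)!) ≤ a' ! * (n-a')! * (b' ! * (m-b')!) := by
    rw [show n-a = p by omega, show m-b = d+q by omega, show n-a' = d+p by omega,
      show m-b' = q by omega, hd, hb']
    calc (a'+d)! * p ! * (b ! * (d+q)!) = (a'+d)! * p ! * b ! * (d+q)! := by ring
      _ ≤ a' ! * (d+p)! * (b+d)! * q ! := F
      _ = a' ! * (d+p)! * ((b+d)! * q !) := by ring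
  have id1 := Nat.choose_mul_factorial_mul_factorial h2
  have id2 := Nat.choose_mul_factorial_mul_factorial (show b ≤ m by omega)
  have id3 := Nat.choose_mul_factorial_mul_factorial (show a' ≤ n by omega)
  have id4 := Nat.choose_mul_factorial_mul_factorial h4
  have hpos : 0 < a' ! * (n-a')! * (b' ! * (m-b')!) := by positivity
  have main : (n.choose a' * m.choose b') * (a' ! * (n-a')! * (b' ! * (m-b')!)) ≤
      (n.choose a * m.choose b) * (a' ! * (n-a')! * (b' ! * (m-b')!)) := by
    calc (n.choose a' * m.choose b') * (a' ! * (n-a')! * (b' ! * (m-b')!))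
        = (n.choose a' * a' ! * (n-a')!) * (m.choose b' * b' ! * (m-b')!) := by ring
      _ = n ! * m ! := by rw [id3, id4]
      _ = (n.choose a * a ! * (n-a)!) * (m.choose b * b ! * (m-b)!) := by rw [id1, id2]
      _ = (n.choose a * m.choose b) * (a ! * (n-a)! * (b ! * (m-b)!)) := by ring
      _ ≤ (n.choose a * m.choose b) * (a' ! * (n-a')! * (b' ! * (m-b')!)) :=
          Nat.mul_le_mul_left _ key
  exact Nat.le_of_mul_le_mul_right main hpos

/-- The binomial coefficient C(m,k) for integer arguments, equal to 0
when k < 0 or k > m. -/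
def zchoose (m k : ℤ) : ℤ :=
  if 0 ≤ k ∧ k ≤ m then (m.toNat.choose k.toNat : ℤ) else 0

private lemma zchoose_nonneg (m k : ℤ) : 0 ≤ zchoose m k := by
  unfold zchoose; split <;> positivity

private lemma zchoose_eq (m k : ℤ) (h1 : 0 ≤ k) (h2 : k ≤ m) :
    zchoose m k = (m.toNat.choose k.toNat : ℤ) := by
  unfold zchoose; rw [if_pos ⟨h1, h2⟩]

private lemma zchoose_zero (m k : ℤ) (h : ¬(0 ≤ k ∧ k ≤ m)) : zchoose m k = 0 := by
  unfold zchoose; rw [if_neg h]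

/-- Nonnegativity of the determinantal expression for the CSM coefficient
γ_{(α₁≥α₂),(β₁≥β₂)} of a two-row diagram. -/
theorem gamma_two_rows_nonneg (α₁ α₂ β₁ β₂ : ℤ)
    (hα : α₂ ≤ α₁) (hα₂ : 0 ≤ α₂) (hβ : β₂ ≤ β₁) (hβ₂ : 0 ≤ β₂)
    (hβα₁ : β₁ ≤ α₁) (hβα₂ : β₂ ≤ α₂) :
    0 ≤ ∑ ℓ ∈ Finset.Icc (0 : ℤ) α₂,
      Matrix.det !![zchoose (α₁ - ℓ) (β₁ - ℓ), zchoose (α₁ - ℓ) (β₂ - 1 - ℓ);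
                    zchoose α₂ (β₁ + 1 + ℓ), zchoose α₂ (β₂ + ℓ)] := by
  apply Finset.sum_nonneg
  intro ℓ hℓ
  rw [Finset.mem_Icc] at hℓ
  obtain ⟨hℓ0, hℓα⟩ := hℓ
  rw [Matrix.det_fin_two_of]
  rw [sub_nonneg]
  by_cases hc : 0 ≤ β₂ - 1 - ℓ ∧ β₁ + 1 + ℓ ≤ α₂
  · obtain ⟨hc1, hc2⟩ := hc
    -- all four entries are in range
    rw [zchoose_eq (α₁ - ℓ) (β₁ - ℓ) (by omega) (by omega),
        zchoose_eq (α₁ - ℓ) (β₂ - 1 - ℓ) (by omega) (by omega),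
        zchoose_eq α₂ (β₁ + 1 + ℓ) (by omega) (by omega),
        zchoose_eq α₂ (β₂ + ℓ) (by omega) (by omega)]
    have key := chooseIneq (α₁ - ℓ).toNat α₂.toNat (β₁ - ℓ).toNat (β₂ - 1 - ℓ).toNat
      (β₂ + ℓ).toNat (β₁ + 1 + ℓ).toNat (by omega) (by omega) (by omega) (by omega)
      (by omega) (by omega) (by omega)
    push_cast
    exact_mod_cast key
  · rcases not_and_or.mp hc with h | h
    · rw [zchoose_zero (α₁ - ℓ) (β₂ - 1 - ℓ) (by omega)]
      rw [zero_mul]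
      exact mul_nonneg (zchoose_nonneg _ _) (zchoose_nonneg _ _)
    · rw [zchoose_zero α₂ (β₁ + 1 + ℓ) (by omega)]
      rw [mul_zero]
      exact mul_nonneg (zchoose_nonneg _ _) (zchoose_nonneg _ _)
end

section
/- Let α₁ ≥ α₂ ≥ 0 and r ≥ 0 be integers. Then Σ_{ℓ=0}^{α₂} det [ [ C(α₁−ℓ, r−ℓ), C(α₁−ℓ, −1−ℓ) ], [ C(α₂, r+1+ℓ), C(α₂, ℓ) ] ] equals the coefficient of u^r in the polynomial (1+u)^{α₁−α₂}(1+2u)^{α₂}. Since C(α₁−ℓ, −1−ℓ) = 0, this says: Σ_{ℓ=0}^{α₂} C(α₁−ℓ, r−ℓ)·C(α₂, ℓ) = Σ_{k} C(α₁−α₂, r−k)·C(α₂, k)·2^k. -/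
open Polynomial

lemma rhs_expand (α₁ α₂ r : ℕ) (hα : α₂ ≤ α₁) :
    ((1 + X) ^ (α₁ - α₂) * (1 + 2 * X) ^ α₂ : Polynomial ℤ).coeff r =
      ∑ ℓ ∈ Finset.range (α₂ + 1),
        (if ℓ ≤ r then ((α₁ - ℓ).choose (r - ℓ) : ℤ) else 0) * (α₂.choose ℓ) := by
  have h2 : (1 + 2 * X : Polynomial ℤ) = (1 + X) + X := by ring
  rw [h2, add_pow (1 + X : Polynomial ℤ) X α₂, Finset.mul_sum, Polynomial.finset_sum_coeff]
  rw [← Finset.sum_range_reflect]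
  refine Finset.sum_congr rfl ?_
  intro ℓ hℓ
  rw [Finset.mem_range, Nat.lt_succ_iff] at hℓ
  have h1 : α₂ + 1 - 1 - ℓ = α₂ - ℓ := by omega
  rw [h1]
  have h3 : (1 + X : Polynomial ℤ) ^ (α₁ - α₂) * ((1 + X) ^ (α₂ - ℓ) * X ^ (α₂ - (α₂ - ℓ)) *
      (α₂.choose (α₂ - ℓ) : Polynomial ℤ)) =
      ((1 + X) ^ (α₁ - ℓ) * X ^ ℓ) * C ((α₂.choose ℓ : ℤ)) := by
    have e1 : α₂ - (α₂ - ℓ) = ℓ := by omega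
    have e2 : (α₁ - α₂) + (α₂ - ℓ) = α₁ - ℓ := by omega
    have e3 : α₂.choose (α₂ - ℓ) = α₂.choose ℓ := Nat.choose_symm hℓ
    rw [e1, e3, ← mul_assoc, ← mul_assoc, ← pow_add, e2]
    rw [Polynomial.C_eq_natCast]
  rw [h3, coeff_mul_C, coeff_mul_X_pow', coeff_one_add_X_pow]

/-- The determinantal formula for γ_{(α₁≥α₂),(r)} agrees with the coefficient of
u^r in (1+u)^{α₁−α₂}(1+2u)^{α₂}. -/
theorem gamma_two_rows_one_row (α₁ α₂ r : ℕ) (hα : α₂ ≤ α₁) :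
    ∑ ℓ ∈ Finset.range (α₂ + 1),
      Matrix.det !![zchoose ((α₁ : ℤ) - ℓ) ((r : ℤ) - ℓ), zchoose ((α₁ : ℤ) - ℓ) (-1 - ℓ);
                    zchoose (α₂ : ℤ) ((r : ℤ) + 1 + ℓ), zchoose (α₂ : ℤ) (ℓ : ℤ)] =
      ((1 + X) ^ (α₁ - α₂) * (1 + 2 * X) ^ α₂ : Polynomial ℤ).coeff r := by
  rw [rhs_expand α₁ α₂ r hα]
  refine Finset.sum_congr rfl ?_
  intro ℓ hℓ
  rw [Finset.mem_range, Nat.lt_succ_iff] at hℓ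
  rw [Matrix.det_fin_two_of]
  have hb : zchoose ((α₁ : ℤ) - ℓ) (-1 - ℓ) = 0 := by
    simp only [zchoose, if_neg]
    rw [if_neg]
    push_neg
    intro h
    omega
  have hd : zchoose (α₂ : ℤ) ℓ = (α₂.choose ℓ : ℤ) := by
    simp only [zchoose]
    rw [if_pos ⟨by positivity, by exact_mod_cast hℓ⟩]
    simp
  have ha : zchoose ((α₁ : ℤ) - ℓ) ((r : ℤ) - ℓ) =
      if ℓ ≤ r then ((α₁ - ℓ).choose (r - ℓ) : ℤ) else 0 := by
    rcases le_or_gt ℓ r with h1 | h1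
    · rw [if_pos h1]
      rcases le_or_gt r α₁ with h2 | h2
      · simp only [zchoose]
        rw [if_pos ⟨by omega, by omega⟩]
        have t1 : ((α₁ : ℤ) - ℓ).toNat = α₁ - ℓ := by omega
        have t2 : ((r : ℤ) - ℓ).toNat = r - ℓ := by omega
        rw [t1, t2]
      · simp only [zchoose]
        rw [if_neg (by omega)]
        have : (α₁ - ℓ).choose (r - ℓ) = 0 := Nat.choose_eq_zero_of_lt (by omega)
        simp [this]
    · rw [if_neg (by omega)]
      simp only [zchoose]
      rw [if_neg (by omega)]
  rw [ha, hb, hd]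
  ring
end

section
/- Let a₁ > a₂ ≥ 0 and r ≥ 0 be integers. In ℚ[[t₁,t₂,u]], the coefficient of t₁^{a₁} t₂^{a₂} u^r in the expansion of (t₁ − t₂) / ((1 − 2t₂ + t₁t₂)(1 − t₁(1+u))(1 − t₂(1+u))) equals the coefficient of t₁^{a₁} t₂^{a₂} u^r in the expansion of 1 / ((1 − t₁(1+u))(1 + u − t₂(1+2u))). -/
/-!
The difference of the two series is
`-(1 - t₂)² / ((1 - 2t₂ + t₁t₂)(1 - t₂(1 + u))(1 + u - t₂(1 + 2u)))`.
Every factor on the right is supported on monomials whose `t₁`-exponent is at most their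
`t₂`-exponent. These exponents form an additive monoid, and power series supported on an additive
monoid of exponents form a subring closed under inversion, so the difference has no monomial with
`a₁ > a₂`.
-/

open MvPowerSeries

namespace MvPowerSeries

variable {σ R k : Type*}

section Supported

variable [Ring R]

def supportedIn (S : AddSubmonoid (σ →₀ ℕ)) : Subring (MvPowerSeries σ R) where
  carrier := {φ | ∀ n ∉ S, coeff n φ = 0}
  mul_mem' {φ ψ} hφ hψ n hn := by
    classical
    rw [coeff_mul]
    refine Finset.sum_eq_zero fun ⟨p, q⟩ hpq => ?_
    rw [Finset.HasAntidiagonal.mem_antidiagonal] at hpq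
    by_cases hp : p ∈ S
    · have hq : q ∉ S := fun hq => hn (hpq ▸ S.add_mem hp hq)
      simp [hψ q hq]
    · simp [hφ p hp]
  one_mem' n hn := by
    classical
    rw [coeff_one, if_neg (fun h : n = 0 => hn (h ▸ S.zero_mem))]
  add_mem' hφ hψ n hn := by simp [hφ n hn, hψ n hn]
  zero_mem' n _ := map_zero _
  neg_mem' hφ n hn := by simp [hφ n hn]

variable {S : AddSubmonoid (σ →₀ ℕ)}

theorem monomial_mem_supportedIn {n : σ →₀ ℕ} (hn : n ∈ S) (a : R) :
    monomial n a ∈ supportedIn S := fun m hm => by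
  classical
  rw [coeff_monomial, if_neg (fun h : m = n => hm (h ▸ hn))]

theorem X_mem_supportedIn {i : σ} (hi : Finsupp.single i 1 ∈ S) :
    (X i : MvPowerSeries σ R) ∈ supportedIn S :=
  monomial_mem_supportedIn hi 1

end Supported

theorem inv_mem_supportedIn [Field k] {S : AddSubmonoid (σ →₀ ℕ)} {φ : MvPowerSeries σ k}
    (hφ : φ ∈ supportedIn S) : φ⁻¹ ∈ supportedIn S := by
  classical
  intro n
  induction n using WellFoundedLT.induction with
  | ind n ih =>
    intro hn
    rw [coeff_inv, if_neg (fun h : n = 0 => hn (h ▸ S.zero_mem))]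
    refine mul_eq_zero_of_right _ (Finset.sum_eq_zero fun ⟨p, q⟩ hpq => ?_)
    rw [Finset.HasAntidiagonal.mem_antidiagonal] at hpq
    split_ifs with hqn
    · by_cases hp : p ∈ S
      · have hq : q ∉ S := fun hq => hn (hpq ▸ S.add_mem hp hq)
        simp [ih q hqn hq]
      · simp [hφ p hp]
    · rfl

section Fractions

variable [Field k] {f g f' g' : MvPowerSeries σ k}

theorem mul_inv_sub_mul_inv (hg : constantCoeff g ≠ 0) (hg' : constantCoeff g' ≠ 0) :
    f * g⁻¹ - f' * g'⁻¹ = (f * g' - f' * g) * (g * g')⁻¹ := by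
  rw [MvPowerSeries.mul_inv_rev]
  linear_combination (-(f * g⁻¹)) * g'.mul_inv_cancel hg' + f' * g'⁻¹ * g.mul_inv_cancel hg

theorem mul_inv_eq_mul_inv_of_mul_eq (hg : constantCoeff g ≠ 0) (hg' : constantCoeff g' ≠ 0)
    (h : f * g' = f' * g) : f * g⁻¹ = f' * g'⁻¹ := by
  rw [MvPowerSeries.eq_mul_inv_iff_mul_eq hg']
  linear_combination g⁻¹ * h + f' * g.inv_mul_cancel hg

end Fractions

end MvPowerSeries

namespace Finsupp

variable {σ : Type*}

def leCone (i j : σ) : AddSubmonoid (σ →₀ ℕ) where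
  carrier := {m | m i ≤ m j}
  add_mem' {m n} hm hn := show m i + n i ≤ m j + n j from add_le_add hm hn
  zero_mem' := le_refl (0 : ℕ)

@[simp]
theorem mem_leCone {i j : σ} {m : σ →₀ ℕ} : m ∈ leCone i j ↔ m i ≤ m j := by
  rfl

end Finsupp

theorem denominator_mem_supportedIn_leCone {R : Type*} [Ring R] :
    ((1 - 2 * X 1 + X 0 * X 1) * (1 - X 1 * (1 + X 2)) * (1 + X 2 - X 1 * (1 + 2 * X 2)) :
      MvPowerSeries (Fin 3) R) ∈ supportedIn (Finsupp.leCone 0 1) := by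
  have hX1 : X 1 ∈ supportedIn (R := R) (Finsupp.leCone (0 : Fin 3) 1) :=
    X_mem_supportedIn (by simp)
  have hX2 : X 2 ∈ supportedIn (R := R) (Finsupp.leCone (0 : Fin 3) 1) :=
    X_mem_supportedIn (by simp)
  have hX0X1 : X 0 * X 1 ∈ supportedIn (R := R) (Finsupp.leCone (0 : Fin 3) 1) := by
    rw [X_def, X_def, monomial_mul_monomial]
    exact monomial_mem_supportedIn (by simp) _
  refine mul_mem (mul_mem ?_ ?_) ?_
  · exact add_mem (sub_mem (one_mem _) (mul_mem (ofNat_mem _ 2) hX1)) hX0X1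
  · exact sub_mem (one_mem _) (mul_mem hX1 (add_mem (one_mem _) hX2))
  · exact sub_mem (add_mem (one_mem _) hX2)
      (mul_mem hX1 (add_mem (one_mem _) (mul_mem (ofNat_mem _ 2) hX2)))

/-- The 'good cone' reduction (d = 2): in ℚ[[t₁,t₂,u]] (with t₁ = X 0, t₂ = X 1,
u = X 2), for all a₁ > a₂ ≥ 0 and r ≥ 0, the coefficient of t₁^{a₁} t₂^{a₂} u^r in
(t₁−t₂)/((1−2t₂+t₁t₂)(1−t₁(1+u))(1−t₂(1+u))) equals the coefficient of
t₁^{a₁} t₂^{a₂} u^r in 1/((1−t₁(1+u))(1+u−t₂(1+2u))). -/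
theorem good_cone_reduction (a₁ a₂ r : ℕ) (h : a₂ < a₁) :
    MvPowerSeries.coeff (R := ℚ)
        (Finsupp.single 0 a₁ + Finsupp.single 1 a₂ + Finsupp.single 2 r)
        (((X 0 : MvPowerSeries (Fin 3) ℚ) - X 1) *
          ((1 - 2 * X 1 + X 0 * X 1) * (1 - X 0 * (1 + X 2)) * (1 - X 1 * (1 + X 2)))⁻¹) =
      MvPowerSeries.coeff (R := ℚ)
        (Finsupp.single 0 a₁ + Finsupp.single 1 a₂ + Finsupp.single 2 r)
        (((1 - (X 0 : MvPowerSeries (Fin 3) ℚ) * (1 + X 2)) *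
          (1 + X 2 - X 1 * (1 + 2 * X 2)))⁻¹) := by
  have hdiff : ((X 0 : MvPowerSeries (Fin 3) ℚ) - X 1) *
        ((1 - 2 * X 1 + X 0 * X 1) * (1 - X 0 * (1 + X 2)) * (1 - X 1 * (1 + X 2)))⁻¹ -
        ((1 - X 0 * (1 + X 2)) * (1 + X 2 - X 1 * (1 + 2 * X 2)))⁻¹ =
      -(1 - X 1) ^ 2 * ((1 - 2 * X 1 + X 0 * X 1) * (1 - X 1 * (1 + X 2)) *
        (1 + X 2 - X 1 * (1 + 2 * X 2)))⁻¹ := by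
    rw [← one_mul (_ * (1 + X 2 - _))⁻¹, mul_inv_sub_mul_inv (by simp) (by simp)]
    exact mul_inv_eq_mul_inv_of_mul_eq (by simp) (by simp) (by ring)
  have hmem := mul_mem
    (neg_mem (pow_mem (sub_mem (one_mem _) (X_mem_supportedIn (i := 1) (by simp))) 2))
    (inv_mem_supportedIn (denominator_mem_supportedIn_leCone (R := ℚ)))
  have hcoeff := congrArg
    (coeff (Finsupp.single 0 a₁ + Finsupp.single 1 a₂ + Finsupp.single 2 r)) hdiff
  rwa [map_sub, hmem _ (by simpa using h), sub_eq_zero] at hcoeff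
end
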